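/- arXiv:2107.05572 — 2 statements merged into one kernel-verified Lean document; each statement's English description precedes it below -/
import Mathlib

section
/- Let a_n = n + 1, viewed as a real number. Then for every n ≥ 0, the polynomial p_n(x) = a_0 + a_1 x + ... + a_n x^n = 1 + 2x + 3x² + ... + (n+1)x^n has exactly n mod 2 real roots counted with multiplicity. -/
open Polynomial

noncomputable def Pn (n : ℕ) : Polynomial ℝ :=
  ∑ i ∈ Finset.range (n + 1), C ((i : ℝ) + 1) * X ^ i

noncomputable def Qn (n : ℕ) : Polynomial ℝ :=
  C ((n : ℝ) + 1) * X ^ (n + 2) - C ((n : ℝ) + 2) * X ^ (n + 1) + 1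

lemma key (n : ℕ) : (X - 1) ^ 2 * Pn n = Qn n := by
  induction n with
  | zero =>
    have h2 : C ((2:ℝ)) = (2 : Polynomial ℝ) := map_ofNat C 2
    simp only [Pn, Qn, Finset.range_one, Finset.sum_singleton, Nat.cast_zero, zero_add,
      map_one, one_mul, pow_zero]
    push_cast
    rw [h2]
    ring
  | succ n ih =>
    have hc : C (((n:ℕ):ℝ) + 1 + 1) = C ((n : ℝ) + 2) := by norm_num [map_ofNat]; ring
    have hP : Pn (n + 1) = Pn n + C ((n : ℝ) + 2) * X ^ (n + 1) := by
      rw [Pn, Pn, Finset.sum_range_succ]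
      push_cast
      rw [hc]
    have hCa : ∀ a b : ℝ, C (a + b) = C a + C b := fun a b => C_add
    rw [hP, mul_add, ih, Qn, Qn]
    push_cast
    simp only [hCa, C_1, map_ofNat]
    ring

lemma evalP_pos_of_nonneg (n : ℕ) {x : ℝ} (hx : 0 ≤ x) : 0 < (Pn n).eval x := by
  have h0 : (0 : ℕ) ∈ Finset.range (n + 1) := by simp
  have : (1 : ℝ) ≤ ∑ i ∈ Finset.range (n + 1), ((i : ℝ) + 1) * x ^ i := by
    have hterm : ∀ i ∈ Finset.range (n+1), 0 ≤ ((i : ℝ) + 1) * x ^ i := by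
      intro i _
      exact mul_nonneg (by positivity) (pow_nonneg hx i)
    have := Finset.single_le_sum hterm h0
    simpa using this
  have heval : (Pn n).eval x = ∑ i ∈ Finset.range (n + 1), ((i : ℝ) + 1) * x ^ i := by
    simp [Pn, eval_finset_sum]
  linarith [heval ▸ this]

lemma evalQ (n : ℕ) (x : ℝ) :
    (Qn n).eval x = ((n : ℝ) + 1) * x ^ (n + 2) - ((n : ℝ) + 2) * x ^ (n + 1) + 1 := by
  simp [Qn]

lemma evalP_eq (n : ℕ) (x : ℝ) : (x - 1) ^ 2 * (Pn n).eval x = (Qn n).eval x := by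
  have := congrArg (eval x) (key n)
  simpa using this

lemma Pn_ne_zero (n : ℕ) : Pn n ≠ 0 := by
  intro h
  have := evalP_pos_of_nonneg n (x := 0) le_rfl
  rw [h] at this; simp at this

theorem stmt_13 :
    ∀ n : ℕ, Multiset.card
      ((∑ i ∈ Finset.range (n + 1),
        C ((i : ℝ) + 1) * X ^ i : Polynomial ℝ).roots) = n % 2 := by
  intro n
  show Multiset.card (Pn n).roots = n % 2
  rcases Nat.even_or_odd n with he | ho
  · -- even case: no real roots
    have hpos : ∀ x : ℝ, 0 < (Pn n).eval x := by
      intro x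
      rcases le_or_gt 0 x with hx | hx
      · exact evalP_pos_of_nonneg n hx
      · have h1 : (0:ℝ) < (x - 1) ^ 2 := by nlinarith
        have h2 : x ^ (n + 1) < 0 := Odd.pow_neg (Even.add_one he) hx
        have h3 : 0 < x ^ (n + 2) := by
          have : Even (n + 2) := by simpa using he.add (by norm_num)
          exact this.pow_pos hx.ne
        have hq : 0 < (Qn n).eval x := by
          rw [evalQ]
          have hn : (0:ℝ) ≤ (n : ℝ) := Nat.cast_nonneg n
          nlinarith
        nlinarith [evalP_eq n x]
    have hr : (Pn n).roots = 0 := by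
      rw [Multiset.eq_zero_iff_forall_notMem]
      intro x hx
      have := (Polynomial.mem_roots (Pn_ne_zero n)).1 hx
      linarith [hpos x, Polynomial.IsRoot.eq_zero this]
    rw [hr, Nat.even_iff.1 he]
    rfl
  · -- odd case: exactly one simple root
    have hn1 : 1 ≤ n := ho.pos
    have hoddn2 : Odd (n + 2) := by simpa using ho.add_even (by norm_num)
    have hevenn1 : Even (n + 1) := Odd.add_one ho
    -- roots are negative
    have hneg : ∀ x : ℝ, (Pn n).IsRoot x → x < 0 := by
      intro x hx
      by_contra h
      push_neg at h
      exact absurd hx.symm (ne_of_lt (evalP_pos_of_nonneg n h))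
    -- Q is strictly monotone on Iic 0
    have hmono : StrictMonoOn (fun x => (Qn n).eval x) (Set.Iic (0:ℝ)) := by
      apply strictMonoOn_of_deriv_pos (convex_Iic 0) ((Qn n).continuous.continuousOn)
      intro x hx
      rw [interior_Iic, Set.mem_Iio] at hx
      rw [Polynomial.deriv]
      have hdq : ((Qn n).derivative).eval x
          = ((n:ℝ) + 2) * (((n:ℝ) + 1) * x ^ (n + 1)) - ((n:ℝ) + 1) * (((n:ℝ) + 2) * x ^ n) := by
        simp [Qn, derivative_X_pow]
        ring
      rw [hdq]
      have hxn : x ^ n < 0 := Odd.pow_neg ho hx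
      have hxn1 : 0 < x ^ (n + 1) := hevenn1.pow_pos hx.ne
      have hA : 0 < ((n:ℝ) + 2) * (((n:ℝ) + 1) * x ^ (n + 1)) :=
        mul_pos (by positivity) (mul_pos (by positivity) hxn1)
      have hB : ((n:ℝ) + 1) * (((n:ℝ) + 2) * x ^ n) < 0 :=
        mul_neg_of_pos_of_neg (by positivity) (mul_neg_of_pos_of_neg (by positivity) hxn)
      linarith
    -- existence of a root via IVT
    have hQm2 : (Qn n).eval (-2) < 0 := by
      rw [evalQ]
      rw [hoddn2.neg_pow, hevenn1.neg_pow]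
      have h4 : (4:ℝ) ≤ 2 ^ (n + 1) := by
        calc (4:ℝ) = 2 ^ 2 := by norm_num
        _ ≤ 2 ^ (n + 1) := pow_le_pow_right₀ one_le_two (by omega)
      have hn : (1:ℝ) ≤ (n : ℝ) := by exact_mod_cast hn1
      have h22 : (2:ℝ) ^ (n + 2) = 2 * 2 ^ (n + 1) := by ring
      nlinarith
    have hPm2 : (Pn n).eval (-2) < 0 := by
      have := evalP_eq n (-2)
      nlinarith
    have hP0 : 0 < (Pn n).eval 0 := evalP_pos_of_nonneg n le_rfl
    obtain ⟨r, hr_mem, hr⟩ : ∃ r ∈ Set.Icc (-2:ℝ) 0, (Pn n).eval r = 0 := by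
      have hc : ContinuousOn (fun x => (Pn n).eval x) (Set.Icc (-2:ℝ) 0) :=
        (Pn n).continuous.continuousOn
      have := intermediate_value_Icc (by norm_num : (-2:ℝ) ≤ 0) hc
      have h0mem : (0:ℝ) ∈ Set.Icc ((Pn n).eval (-2)) ((Pn n).eval 0) :=
        ⟨le_of_lt hPm2, le_of_lt hP0⟩
      obtain ⟨r, hr1, hr2⟩ := this h0mem
      exact ⟨r, hr1, hr2⟩
    have hrroot : (Pn n).IsRoot r := hr
    have hrneg : r < 0 := hneg r hrroot
    -- any root equals r
    have huniq : ∀ x : ℝ, (Pn n).IsRoot x → x = r := by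
      intro x hx
      have hxneg : x < 0 := hneg x hx
      have hQx : (Qn n).eval x = 0 := by
        have := evalP_eq n x
        rw [hx] at this
        simpa using this.symm
      have hQr : (Qn n).eval r = 0 := by
        have := evalP_eq n r
        rw [hrroot] at this
        simpa using this.symm
      exact hmono.injOn (Set.mem_Iic.2 hxneg.le) (Set.mem_Iic.2 hrneg.le) (by rw [hQx, hQr])
    -- derivative of P at r is nonzero
    have hQ'r : ((Qn n).derivative).eval r ≠ 0 := by
      have hdq : ((Qn n).derivative).eval r
          = ((n:ℝ) + 2) * (((n:ℝ) + 1) * r ^ (n + 1)) - ((n:ℝ) + 1) * (((n:ℝ) + 2) * r ^ n) := by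
        simp [Qn, derivative_X_pow]
        ring
      rw [hdq]
      have hrn : r ^ n < 0 := Odd.pow_neg ho hrneg
      have hrn1 : 0 < r ^ (n + 1) := hevenn1.pow_pos hrneg.ne
      have hA : 0 < ((n:ℝ) + 2) * (((n:ℝ) + 1) * r ^ (n + 1)) :=
        mul_pos (by positivity) (mul_pos (by positivity) hrn1)
      have hB : ((n:ℝ) + 1) * (((n:ℝ) + 2) * r ^ n) < 0 :=
        mul_neg_of_pos_of_neg (by positivity) (mul_neg_of_pos_of_neg (by positivity) hrn)
      exact ne_of_gt (by linarith)
    have hP'r : ¬ ((Pn n).derivative).IsRoot r := by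
      intro habs
      apply hQ'r
      have hkey := congrArg (fun p => Polynomial.eval r (Polynomial.derivative p)) (key n)
      simp only [derivative_mul] at hkey
      simp only [eval_add, eval_mul] at hkey
      rw [show ((Pn n).eval r) = 0 from hrroot, show ((Pn n).derivative.eval r) = 0 from habs] at hkey
      simpa using hkey.symm
    have hmult : (Pn n).rootMultiplicity r = 1 := by
      have hge : 0 < (Pn n).rootMultiplicity r :=
        (Polynomial.rootMultiplicity_pos (Pn_ne_zero n)).2 hrroot
      have hlt : ¬ 1 < (Pn n).rootMultiplicity r := by
        rw [Polynomial.one_lt_rootMultiplicity_iff_isRoot (Pn_ne_zero n)]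
        rintro ⟨-, h2⟩
        exact hP'r h2
      omega
    have hroots : (Pn n).roots = {r} := by
      refine Multiset.ext.2 fun a => ?_
      rw [Polynomial.count_roots]
      by_cases ha : a = r
      · subst ha
        simp [hmult]
      · have : ¬ (Pn n).IsRoot a := fun h => ha (huniq a h)
        rw [Polynomial.rootMultiplicity_eq_zero this]
        simp [Multiset.count_singleton, ha]
    rw [hroots, Nat.odd_iff.1 ho]
    rfl
end

section
/- For every integer m ≥ 0, the polynomial p_m(x) = 1 + Σ_{i=1}^m (i·x)^i = 1 + Σ_{i=1}^m i^i x^i has zero or one real roots (counted with multiplicity) according as m is even or odd; that is, the number of real roots of p_m counted with multiplicity equals m mod 2. -/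
open Polynomial Finset

lemma altsum_pos : ∀ (N : ℕ) (c : ℕ → ℝ), (∀ i, 0 < c i) →
    (∀ i, c (i+1) * c (i+1) ≤ c i * c (i+2)) →
    0 < ∑ i ∈ range (2*N+1), (-1:ℝ)^i * c i := by
  intro N
  induction N with
  | zero => intro c hpos _; simpa using hpos 0
  | succ N ih =>
    intro c hpos hlc
    rcases le_or_gt (c 1) (c 0) with h | h
    · have key : ∑ i ∈ range (2*(N+1)+1), (-1:ℝ)^i * c i
          = (c 0 - c 1) + ∑ i ∈ range (2*N+1), (-1:ℝ)^i * c (i+2) := by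
        rw [show 2*(N+1)+1 = (2*N+1)+1+1 by ring, Finset.sum_range_succ', Finset.sum_range_succ']
        simp only [pow_succ, pow_zero, one_mul, mul_neg, mul_one, neg_neg, neg_mul]
        ring
      rw [key]
      have := ih (fun i => c (i+2)) (fun i => hpos _) (fun i => hlc _)
      linarith
    · have hmono : ∀ i, c i < c (i+1) := by
        intro i; induction i with
        | zero => exact h
        | succ i ih2 => nlinarith [hlc i, hpos i, hpos (i+1), hpos (i+2)]
      have key : ∀ M, ∑ i ∈ range (2*M+1), (-1:ℝ)^i * c i
          = c 0 + ∑ a ∈ range M, (c (2*a+2) - c (2*a+1)) := by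
        intro M; induction M with
        | zero => simp
        | succ M ih3 =>
          rw [show 2*(M+1)+1 = (2*M+1)+1+1 by ring,
            Finset.sum_range_succ _ ((2*M+1)+1), Finset.sum_range_succ _ (2*M+1), ih3,
            Finset.sum_range_succ]
          have h1 : (-1:ℝ)^(2*M+1) = -1 := by simp [pow_succ, pow_mul]
          have h2 : (-1:ℝ)^(2*M+1+1) = 1 := by simp [pow_succ, pow_mul]
          rw [h1, h2]
          have e1 : 2*M+1+1 = 2*M+2 := by ring
          rw [e1]; ring
      rw [key]
      have hs : 0 ≤ ∑ a ∈ range (N+1), (c (2*a+2) - c (2*a+1)) :=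
        Finset.sum_nonneg fun a _ => by linarith [hmono (2*a+1)]
      linarith [hpos 0]
lemma bern_aux {n : ℝ} {k : ℕ} (hn : 1 ≤ n) (hk : (k:ℝ) < n) :
    (n+1)^k ≤ n^k * (n / (n - k)) := by
  have hn0 : (0:ℝ) < n := by linarith
  have hinv : 1/n ≤ 1 := by rw [div_le_one hn0]; exact hn
  have h1 : 1 - (k:ℝ)/n ≤ (1 - 1/n)^k := by
    have := one_add_mul_le_pow (a := -(1/n)) (by nlinarith [one_div_pos.mpr hn0]) k
    have e : (1 : ℝ) + -(1/n) = 1 - 1/n := by ring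
    rw [e] at this
    calc (1:ℝ) - (k:ℝ)/n = 1 + (k:ℝ) * (-(1/n)) := by ring
    _ ≤ _ := this
  have hpos : (0:ℝ) < 1 - (k:ℝ)/n := by
    rw [sub_pos, div_lt_one hn0]; exact hk
  have h2 : (1 + 1/n)^k * (1 - 1/n)^k ≤ 1 := by
    rw [← mul_pow]
    have e : (1 + 1/n) * (1 - 1/n) = 1 - (1/n)^2 := by ring
    rw [e]
    apply pow_le_one₀ <;> nlinarith [one_div_pos.mpr hn0]
  have h3 : (1 + 1/n)^k ≤ 1 / (1 - (k:ℝ)/n) := by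
    rw [le_div_iff₀ hpos]
    calc (1 + 1/n)^k * (1 - (k:ℝ)/n) ≤ (1 + 1/n)^k * (1 - 1/n)^k :=
          mul_le_mul_of_nonneg_left h1 (by positivity)
    _ ≤ 1 := h2
  have e2 : (n+1)^k = n^k * (1 + 1/n)^k := by
    rw [← mul_pow]; congr 1; field_simp
  rw [e2]
  apply mul_le_mul_of_nonneg_left _ (by positivity)
  calc (1 + 1/n)^k ≤ 1 / (1 - (k:ℝ)/n) := h3
  _ = n / (n - k) := by
      rw [one_div, eq_div_iff (by linarith), inv_mul_eq_div, div_eq_iff (by positivity)]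
      field_simp

lemma keyA (i : ℕ) : ((i:ℝ)+1)^(2*i+2) ≤ (i:ℝ)^i * ((i:ℝ)+2)^(i+2) := by
  rcases Nat.eq_zero_or_pos i with h0 | h1
  · subst h0; norm_num
  · have hi : (1:ℝ) ≤ (i:ℝ) := by exact_mod_cast h1
    set x := (i:ℝ) with hx
    set n := x*(x+2) with hn
    have hn1 : (1:ℝ) ≤ n := by nlinarith
    have hk : (i:ℝ) < n := by rw [← hx]; nlinarith
    have hb := bern_aux hn1 hk
    have hdiv : n / (n - i) = (x+2)/(x+1) := by
      rw [← hx, div_eq_div_iff (by nlinarith) (by nlinarith)]; ring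
    rw [hdiv] at hb
    have hsq : (x+1)^2 = n+1 := by rw [hn]; ring
    calc (x+1)^(2*i+2) = ((x+1)^2)^(i+1) := by rw [← pow_mul]; ring_nf
    _ = (n+1) * (n+1)^i := by rw [hsq, pow_succ]; ring
    _ ≤ (n+1) * (n^i * ((x+2)/(x+1))) := by
        apply mul_le_mul_of_nonneg_left hb (by nlinarith)
    _ = n^i * ((x+1) * (x+2)) := by
        rw [← hsq]; field_simp
    _ ≤ n^i * ((x+2) * (x+2)) := by
        apply mul_le_mul_of_nonneg_left _ (by positivity)
        nlinarith
    _ = x^i * (x+2)^(i+2) := by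
        rw [hn, mul_pow, pow_add]; ring

lemma keyB (i : ℕ) (hi : 1 ≤ i) :
    ((i:ℝ)+1)^(2*i+4) ≤ (i:ℝ)^(i+1) * ((i:ℝ)+2)^(i+3) := by
  rcases eq_or_lt_of_le hi with h1 | h2
  · rw [← h1]; norm_num
  · have hi2 : (2:ℝ) ≤ (i:ℝ) := by exact_mod_cast h2
    set x := (i:ℝ) with hx
    set n := x*(x+2) with hn
    have hn1 : (1:ℝ) ≤ n := by nlinarith
    have hk : ((i+1 : ℕ):ℝ) < n := by push_cast; rw [← hx]; nlinarith
    have hb := bern_aux hn1 hk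
    have hc : ((i+1:ℕ):ℝ) = x + 1 := by push_cast; rw [hx]
    rw [hc] at hb
    have hsq : (x+1)^2 = n+1 := by rw [hn]; ring
    have hpos : (0:ℝ) < n - (x+1) := by rw [hn]; nlinarith
    calc (x+1)^(2*i+4) = ((x+1)^2)^(i+2) := by rw [← pow_mul]; ring_nf
    _ = (n+1) * (n+1)^(i+1) := by rw [hsq, pow_succ]; ring
    _ ≤ (n+1) * (n^(i+1) * (n / (n - (x+1)))) := by
        apply mul_le_mul_of_nonneg_left hb (by nlinarith)
    _ = n^(i+1) * ((n+1) * n / (n - (x+1))) := by ring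
    _ ≤ n^(i+1) * ((x+2) * (x+2)) := by
        apply mul_le_mul_of_nonneg_left _ (by positivity)
        rw [div_le_iff₀ hpos, ← hsq, hn]
        nlinarith [sq_nonneg x, sq_nonneg (x+1)]
    _ = x^(i+1) * (x+2)^(i+3) := by
        rw [hn, mul_pow, show i+3 = (i+1)+2 by ring, pow_add]; ring
lemma pairsum (c : ℕ → ℝ) : ∀ M, ∑ i ∈ range (2*M), (-1:ℝ)^i * c i
    = ∑ a ∈ range M, (c (2*a) - c (2*a+1)) := by
  intro M; induction M with
  | zero => simp
  | succ M ih =>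
    rw [show 2*(M+1) = (2*M)+1+1 by ring, Finset.sum_range_succ _ ((2*M)+1),
      Finset.sum_range_succ _ (2*M), ih, Finset.sum_range_succ]
    have h1 : (-1:ℝ)^(2*M) = 1 := by simp [pow_mul]
    have h2 : (-1:ℝ)^(2*M+1) = -1 := by simp [pow_succ, pow_mul]
    rw [h1, h2]; ring

lemma term_pos {t : ℝ} (ht : 0 < t) (i : ℕ) : 0 < (i:ℝ)^i * t^i := by
  rcases Nat.eq_zero_or_pos i with h | h
  · subst h; norm_num
  · have hi : (0:ℝ) < i := by exact_mod_cast h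
    exact mul_pos (pow_pos hi i) (pow_pos ht i)

lemma sum_nonneg_pos (m : ℕ) {x : ℝ} (hx : 0 ≤ x) :
    0 < ∑ i ∈ range (m+1), (i:ℝ)^i * x^i := by
  apply Finset.sum_pos'
  · intro i _
    exact mul_nonneg (pow_nonneg (Nat.cast_nonneg i) i) (pow_nonneg hx i)
  · exact ⟨0, Finset.mem_range.mpr (Nat.succ_le_succ (Nat.zero_le m)), by norm_num⟩

lemma oddsum_neg (N : ℕ) : ∑ i ∈ range (2*N+2), (i:ℝ)^i * (-2:ℝ)^i < 0 := by
  have hrw : ∀ i : ℕ, (i:ℝ)^i * (-2:ℝ)^i = (-1:ℝ)^i * ((i:ℝ)^i * (2:ℝ)^i) := by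
    intro i
    have : (-2:ℝ)^i = (-1:ℝ)^i * (2:ℝ)^i := by rw [← mul_pow]; norm_num
    rw [this]; ring
  rw [Finset.sum_congr rfl (fun i _ => hrw i), show 2*N+2 = 2*(N+1) by ring,
    pairsum (fun i => (i:ℝ)^i * (2:ℝ)^i) (N+1)]
  have h0 : (0:ℝ) = ∑ _a ∈ range (N+1), (0:ℝ) := by simp
  rw [h0]
  apply Finset.sum_lt_sum_of_nonempty (by simp)
  intro a _
  have ha : ((2*a:ℕ):ℝ)^(2*a) ≤ ((2*a+1:ℕ):ℝ)^(2*a) := by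
    apply pow_le_pow_left₀ (Nat.cast_nonneg _)
    exact_mod_cast Nat.le_succ _
  have hb : (1:ℝ) ≤ ((2*a+1:ℕ):ℝ)^(2*a) := by
    apply one_le_pow₀
    exact_mod_cast Nat.succ_le_succ (Nat.zero_le _)
  have hp : (0:ℝ) < (2:ℝ)^(2*a) := by positivity
  have h1 : ((2*a:ℕ):ℝ)^(2*a) * (2:ℝ)^(2*a) < ((2*a+1:ℕ):ℝ)^(2*a+1) * (2:ℝ)^(2*a+1) := by
    rw [pow_succ, pow_succ]
    push_cast at ha hb ⊢
    have hx0 : (0:ℝ) ≤ (a:ℝ) := Nat.cast_nonneg a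
    nlinarith [ha, hb, hp, mul_pos (lt_of_lt_of_le zero_lt_one hb) hp,
      mul_nonneg (mul_nonneg (zero_le_one.trans hb) hp.le) hx0]
  linarith [h1]
lemma evensum_pos (N : ℕ) (x : ℝ) : 0 < ∑ i ∈ range (2*N+1), (i:ℝ)^i * x^i := by
  rcases le_or_gt 0 x with hx | hx
  · have := sum_nonneg_pos (2*N) hx
    simpa using this
  · have ht : 0 < -x := by linarith
    have hrw : ∀ i : ℕ, (i:ℝ)^i * x^i = (-1:ℝ)^i * ((i:ℝ)^i * (-x)^i) := by
      intro i
      have : x^i = (-1:ℝ)^i * (-x)^i := by rw [← mul_pow]; ring_nf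
      rw [this]; ring
    rw [Finset.sum_congr rfl (fun i _ => hrw i)]
    apply altsum_pos N (fun i => (i:ℝ)^i * (-x)^i) (fun i => term_pos ht i)
    intro i
    have h1 : ((i+1:ℕ):ℝ) = (i:ℝ)+1 := by push_cast; ring
    have h2 : ((i+2:ℕ):ℝ) = (i:ℝ)+2 := by push_cast; ring
    rw [h1, h2]
    calc ((i:ℝ)+1)^(i+1) * (-x)^(i+1) * (((i:ℝ)+1)^(i+1) * (-x)^(i+1))
        = ((i:ℝ)+1)^(2*i+2) * (-x)^(2*i+2) := by
          rw [show 2*i+2 = (i+1)+(i+1) by ring, pow_add, pow_add]; ring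
    _ ≤ ((i:ℝ)^i * ((i:ℝ)+2)^(i+2)) * (-x)^(2*i+2) :=
          mul_le_mul_of_nonneg_right (keyA i) (by positivity)
    _ = (i:ℝ)^i * (-x)^i * (((i:ℝ)+2)^(i+2) * (-x)^(i+2)) := by
          rw [show 2*i+2 = i+(i+2) by ring, pow_add]; ring

lemma derivsum_pos (N : ℕ) {x : ℝ} (hx : x < 0) :
    0 < ∑ a ∈ range (2*N+1), ((a+1:ℕ):ℝ)^(a+2) * x^a := by
  have ht : 0 < -x := by linarith
  have hrw : ∀ a : ℕ, ((a+1:ℕ):ℝ)^(a+2) * x^a = (-1:ℝ)^a * (((a+1:ℕ):ℝ)^(a+2) * (-x)^a) := by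
    intro a
    have : x^a = (-1:ℝ)^a * (-x)^a := by rw [← mul_pow]; ring_nf
    rw [this]; ring
  rw [Finset.sum_congr rfl (fun a _ => hrw a)]
  apply altsum_pos N (fun a => ((a+1:ℕ):ℝ)^(a+2) * (-x)^a)
  · intro a
    have : (0:ℝ) < ((a+1:ℕ):ℝ) := by exact_mod_cast Nat.succ_pos a
    positivity
  intro a
  have hB := keyB (a+1) (Nat.le_add_left 1 a)
  have h1 : ((a+1+1:ℕ):ℝ) = ((a+1:ℕ):ℝ)+1 := by push_cast; ring
  have h2 : ((a+2+1:ℕ):ℝ) = ((a+1:ℕ):ℝ)+2 := by push_cast; ring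
  rw [h1, h2]
  have h3 : ((a+1:ℕ):ℝ) = (a:ℝ)+1 := by push_cast; ring
  rw [h3] at hB ⊢
  calc ((a:ℝ)+1+1)^(a+1+2) * (-x)^(a+1) * (((a:ℝ)+1+1)^(a+1+2) * (-x)^(a+1))
      = ((a:ℝ)+1+1)^(2*(a+1)+4) * (-x)^(2*a+2) := by
        rw [show 2*(a+1)+4 = (a+1+2)+(a+1+2) by ring, show 2*a+2 = (a+1)+(a+1) by ring,
          pow_add, pow_add]; ring
  _ ≤ (((a:ℝ)+1)^(a+1+1) * (((a:ℝ)+1)+2)^(a+1+3)) * (-x)^(2*a+2) :=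
        mul_le_mul_of_nonneg_right hB (by positivity)
  _ = ((a:ℝ)+1)^(a+2) * (-x)^a * (((a:ℝ)+1+2)^(a+2+2) * (-x)^(a+2)) := by
        rw [show a+1+3 = a+2+2 by ring, show 2*a+2 = a+(a+2) by ring, pow_add]; ring
lemma evalP (m : ℕ) (x : ℝ) :
    (1 + ∑ i ∈ Finset.Icc 1 m, C ((i : ℝ) ^ i) * X ^ i).eval x
      = ∑ i ∈ range (m+1), (i:ℝ)^i * x^i := by
  rw [eval_add, eval_one, eval_finset_sum]
  simp only [eval_mul, eval_C, eval_pow, eval_X]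
  rw [Finset.sum_range_succ']
  have h : ∑ i ∈ Finset.Icc 1 m, (i:ℝ)^i * x^i
      = ∑ i ∈ range m, ((i+1:ℕ):ℝ)^(i+1) * x^(i+1) := by
    rw [show Finset.Icc 1 m = Finset.Ico 1 (m+1) by rw [Finset.Ico_add_one_right_eq_Icc],
      Finset.sum_Ico_eq_sum_range]
    simp [Nat.add_comm]
  rw [h]
  push_cast
  ring

lemma evalDP (m : ℕ) (x : ℝ) :
    (derivative (1 + ∑ i ∈ Finset.Icc 1 m, C ((i : ℝ) ^ i) * X ^ i)).eval x
      = ∑ a ∈ range m, ((a+1:ℕ):ℝ)^(a+2) * x^a := by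
  rw [derivative_add, derivative_one, derivative_sum]
  simp only [derivative_C_mul, derivative_X_pow]
  rw [eval_add, eval_zero, eval_finset_sum, zero_add]
  simp only [eval_mul, eval_C, eval_pow, eval_X, eval_natCast]
  rw [show Finset.Icc 1 m = Finset.Ico 1 (m+1) by rw [Finset.Ico_add_one_right_eq_Icc],
    Finset.sum_Ico_eq_sum_range]
  apply Finset.sum_congr (by norm_num)
  intro a _
  rw [show 1 + a - 1 = a from by omega]
  push_cast
  ring
theorem stmt_16 (m : ℕ) :
    Multiset.card
      ((1 + ∑ i ∈ Finset.Icc 1 m,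
        C ((i : ℝ) ^ i) * X ^ i : Polynomial ℝ).roots) = m % 2 := by
  set P : Polynomial ℝ := 1 + ∑ i ∈ Finset.Icc 1 m, C ((i : ℝ) ^ i) * X ^ i with hP
  have heval : ∀ x : ℝ, P.eval x = ∑ i ∈ range (m+1), (i:ℝ)^i * x^i := fun x => evalP m x
  have hf0 : P.eval 0 = 1 := by
    rw [heval 0, Finset.sum_eq_single 0]
    · norm_num
    · intro b _ hb; rw [zero_pow hb]; ring
    · intro h; exact absurd (Finset.mem_range.mpr (Nat.succ_pos m)) h
  have hne : P ≠ 0 := by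
    intro h; rw [h, eval_zero] at hf0; norm_num at hf0
  rcases Nat.even_or_odd m with he | ho
  · obtain ⟨N, hN⟩ := he
    subst hN
    have card0 : P.roots = 0 := by
      rw [Multiset.eq_zero_iff_forall_notMem]
      intro a ha
      rw [mem_roots'] at ha
      have h2 := evensum_pos N a
      rw [show 2*N+1 = N+N+1 from by ring, ← heval a] at h2
      exact h2.ne' ha.2
    rw [card0]
    simp [Nat.even_iff.mp ⟨N, rfl⟩]
  · obtain ⟨N, hN⟩ := ho
    subst hN
    have hcont : Continuous fun x : ℝ => P.eval x := P.continuous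
    have hneg : P.eval (-2) < 0 := by
      rw [heval (-2)]
      have := oddsum_neg N
      rw [show 2*N+2 = 2*N+1+1 from by ring] at this
      exact this
    obtain ⟨x₀, hx₀mem, hx₀⟩ : ∃ x ∈ Set.Icc (-2:ℝ) 0, P.eval x = 0 := by
      have h := intermediate_value_Icc (by norm_num : (-2:ℝ) ≤ 0) hcont.continuousOn
      have h0 : (0:ℝ) ∈ Set.Icc (P.eval (-2)) (P.eval 0) := by
        rw [hf0]; exact ⟨le_of_lt hneg, by norm_num⟩
      obtain ⟨x, hx, hfx⟩ := h h0
      exact ⟨x, hx, hfx⟩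
    have hposx : ∀ y : ℝ, 0 ≤ y → 0 < P.eval y := by
      intro y hy
      rw [heval y]
      exact sum_nonneg_pos (2*N+1) hy
    have hx₀neg : x₀ < 0 := by
      rcases lt_or_ge x₀ 0 with h | h
      · exact h
      · exact absurd hx₀ (hposx x₀ h).ne'
    have hdpos : ∀ x : ℝ, x < 0 → 0 < P.derivative.eval x := by
      intro x hx
      rw [hP, evalDP]
      exact derivsum_pos N hx
    have hsm : StrictMonoOn (fun x : ℝ => P.eval x) (Set.Iic 0) := by
      apply strictMonoOn_of_deriv_pos (convex_Iic 0) hcont.continuousOn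
      intro x hx
      rw [interior_Iic] at hx
      rw [Polynomial.deriv]
      exact hdpos x hx
    have hall : ∀ y ∈ P.roots, y = x₀ := by
      intro y hy
      have hy0 : P.eval y = 0 := (mem_roots'.mp hy).2
      have hyneg : y ≤ 0 := by
        by_contra h
        push_neg at h
        exact absurd hy0 (hposx y h.le).ne'
      exact hsm.injOn hyneg (le_of_lt hx₀neg) (by rw [hy0, hx₀])
    have hroot : P.IsRoot x₀ := hx₀
    have hrm : P.rootMultiplicity x₀ = 1 := by
      have h1 : 0 < P.rootMultiplicity x₀ := (Polynomial.rootMultiplicity_pos hne).mpr hroot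
      have h2 : P.rootMultiplicity x₀ ≤ 1 := by
        by_contra h
        push_neg at h
        have hit := Polynomial.isRoot_iterate_derivative_of_lt_rootMultiplicity (n := 1) h
        simp only [Function.iterate_one] at hit
        have hd := hdpos x₀ hx₀neg
        rw [Polynomial.IsRoot] at hit
        linarith
      omega
    classical
    have hrep : P.roots = Multiset.replicate (Multiset.card P.roots) x₀ :=
      Multiset.eq_replicate_card.mpr hall
    have hcount := Polynomial.count_roots (a := x₀) P
    rw [hrep, Multiset.count_replicate, if_pos rfl, hrm] at hcount
    rw [hcount]
    omega
end
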